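/- arXiv:1209.4628 — 3 statements merged into one kernel-verified Lean document; each statement's English description precedes it below -/
import Mathlib

section
/- Let (Ge, Go) be a signed graph on a finite vertex type V, and suppose V = V₁ ∪ V₂ with V₁ ∩ V₂ = {v}, where every edge of Ge ⊔ Go has both ends in V₁ or both ends in V₂. For i = 1, 2 let (Geᵢ, Goᵢ) be the signed graph induced on Vᵢ. Then ν(Ge, Go) = max(ν(Ge₁, Go₁), ν(Ge₂, Go₂)). -/
open Matrix

/-- The set `S(Ge, Go)` of real symmetric matrices compatible with the signed graph
encoded by the pair of simple graphs `(Ge, Go)` (even graph / odd graph). -/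
def SignedSet {V : Type*} (Ge Go : SimpleGraph V) : Set (Matrix V V ℝ) :=
  {A | A.IsSymm ∧ ∀ i j,
    ((Ge.Adj i j ∧ ¬ Go.Adj i j) → A i j < 0) ∧
    ((Go.Adj i j ∧ ¬ Ge.Adj i j) → 0 < A i j) ∧
    ((i ≠ j ∧ ¬ Ge.Adj i j ∧ ¬ Go.Adj i j) → A i j = 0)}

/-- The nullity of a matrix: the dimension of its kernel. -/
noncomputable def matNullity {V : Type*} [Fintype V] (A : Matrix V V ℝ) : ℕ :=
  Module.finrank ℝ (LinearMap.ker A.mulVecLin)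

/-- The Strong Arnold Property for a matrix with respect to a signed graph `(Ge, Go)`. -/
def HasSAP {V : Type*} [Fintype V] (Ge Go : SimpleGraph V) (A : Matrix V V ℝ) : Prop :=
  ∀ X : Matrix V V ℝ, X.IsSymm →
    (∀ i j, (i = j ∨ (Ge ⊔ Go).Adj i j) → X i j = 0) →
    A * X = 0 → X = 0

/-- `ν(Ge, Go)`: the maximum nullity of a positive semidefinite matrix in `S(Ge, Go)`
having the Strong Arnold Property. -/
noncomputable def nuSigned {V : Type*} [Fintype V] (Ge Go : SimpleGraph V) : ℕ :=
  sSup {n | ∃ A ∈ SignedSet Ge Go, A.PosSemidef ∧ HasSAP Ge Go A ∧ matNullity A = n}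

/-- `M₊(Ge, Go)`: the maximum nullity of a positive semidefinite matrix in `S(Ge, Go)`. -/
noncomputable def MplusSigned {V : Type*} [Fintype V] (Ge Go : SimpleGraph V) : ℕ :=
  sSup {n | ∃ A ∈ SignedSet Ge Go, A.PosSemidef ∧ matNullity A = n}

/-- A signed graph `(Ge, Go)` is bipartite (balanced) if some set `U` of vertices meets
every odd edge in exactly one end and every even edge in both ends or neither end. -/
def IsBalanced {V : Type*} (Ge Go : SimpleGraph V) : Prop :=
  ∃ U : Set V, (∀ i j, Go.Adj i j → ((i ∈ U) ↔ j ∉ U)) ∧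
    (∀ i j, Ge.Adj i j → ((i ∈ U) ↔ j ∈ U))

/-!
Write a positive semidefinite `A ∈ S(Ge, Go)` as a Gram matrix. The vectors indexed by `V₁ \ {v}`
are orthogonal to those indexed by `V₂ \ {v}`, so splitting the vector at `v` orthogonally writes
`A` as a one-sum of positive semidefinite matrices `B₁`, `B₂` on the two sides. If both kernels
contained nonzero vectors `x₁`, `x₂` vanishing at `v`, then `x₁ x₂ᵀ + x₂ x₁ᵀ` would violate the
Strong Arnold Property; so on one side, say `V₂`, evaluation at `v` is injective on `ker B₂`, and
shifting a multiple of `eᵥ eᵥᵀ` from `B₂` to `B₁` makes it bijective. Then the kernel vectors of the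
one-sum are those of `B₁` continued by multiples of a fixed `z ∈ ker B₂` with `z v = 1`: the
nullities agree, and Strong Arnold witnesses transfer in both directions by gluing along `z`.
Conversely, every signed graph carries a positive definite matrix, and lowering its diagonal entry
at `v` by the Schur complement yields such a `B₂` on `V₂`; gluing it to an optimal matrix on `V₁`
gives `ν(Ge₁, Go₁) ≤ ν(Ge, Go)`.
-/

open scoped RealInnerProductSpace

section RealMatrix

variable {n m : Type*} [Fintype n] [Fintype m]

theorem Matrix.PosSemidef.add_mulVec_eq_zero_iff {A B : Matrix n n ℝ} (hA : A.PosSemidef)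
    (hB : B.PosSemidef) {x : n → ℝ} : (A + B) *ᵥ x = 0 ↔ A *ᵥ x = 0 ∧ B *ᵥ x = 0 := by
  refine ⟨fun h => ?_, fun h => by rw [add_mulVec, h.1, h.2, add_zero]⟩
  have hA₀ := hA.dotProduct_mulVec_nonneg x
  have hB₀ := hB.dotProduct_mulVec_nonneg x
  have hsum : star x ⬝ᵥ A *ᵥ x + star x ⬝ᵥ B *ᵥ x = 0 := by
    rw [← dotProduct_add, ← add_mulVec, h, dotProduct_zero]
  exact ⟨(hA.dotProduct_mulVec_zero_iff x).1 (by linarith),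
    (hB.dotProduct_mulVec_zero_iff x).1 (by linarith)⟩

theorem Matrix.mul_eq_zero_iff_forall_mulVec [DecidableEq m] {A : Matrix n n ℝ}
    {X : Matrix n m ℝ} : A * X = 0 ↔ ∀ k, A *ᵥ (X *ᵥ Pi.single k 1) = 0 := by
  simp only [mulVec_mulVec]
  exact ⟨fun h k => by rw [h, zero_mulVec],
    fun h => ext_of_mulVec_single fun k => by rw [h, zero_mulVec]⟩

theorem matNullity_le_of_injOn {M : Matrix n n ℝ} {N : Matrix m m ℝ}
    (f : (n → ℝ) →ₗ[ℝ] (m → ℝ)) (hmaps : ∀ x, M *ᵥ x = 0 → N *ᵥ f x = 0)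
    (hinj : ∀ x, M *ᵥ x = 0 → f x = 0 → x = 0) : matNullity M ≤ matNullity N := by
  let g := f.restrict (p := LinearMap.ker M.mulVecLin) (q := LinearMap.ker N.mulVecLin)
    fun x hx => hmaps x hx
  refine LinearMap.finrank_le_finrank_of_injective (f := g) ?_
  rw [← LinearMap.ker_eq_bot, LinearMap.ker_eq_bot']
  rintro ⟨x, hx⟩ h
  exact Subtype.ext (hinj x hx (congrArg Subtype.val h))

theorem matNullity_le_card (M : Matrix n n ℝ) : matNullity M ≤ Fintype.card n :=
  (Submodule.finrank_le _).trans_eq (Module.finrank_fintype_fun_eq_card ℝ)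

open scoped MatrixOrder in
theorem Matrix.PosSemidef.exists_eq_gram {A : Matrix n n ℝ} (hA : A.PosSemidef) :
    ∃ g : n → EuclideanSpace ℝ n, A = gram ℝ g := by
  classical
  obtain ⟨R, rfl⟩ := CStarAlgebra.nonneg_iff_eq_star_mul_self.mp hA.nonneg
  refine ⟨fun i => WithLp.toLp 2 fun k => R k i, ?_⟩
  ext i j
  simp [mul_apply, PiLp.inner_apply, mul_comm]

theorem gram_add_gram_starProjection_orthogonal {ι F : Type*} [NormedAddCommGroup F]
    [InnerProductSpace ℝ F] (U : Submodule ℝ F) [U.HasOrthogonalProjection] (g : ι → F) :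
    gram ℝ (fun i => U.starProjection (g i)) + gram ℝ (fun i => Uᗮ.starProjection (g i)) =
      gram ℝ g := by
  ext i j
  have hcross : ∀ a b : F, ⟪U.starProjection a, Uᗮ.starProjection b⟫ = 0 := fun a b =>
    Submodule.inner_right_of_mem_orthogonal (U.starProjection_apply_mem a)
      (Uᗮ.starProjection_apply_mem b)
  conv_rhs => rw [gram_apply, ← U.starProjection_add_starProjection_orthogonal (g i),
    ← U.starProjection_add_starProjection_orthogonal (g j)]
  simp only [Matrix.add_apply, gram_apply, inner_add_left, inner_add_right, hcross,
    real_inner_comm (U.starProjection _) (Uᗮ.starProjection _)]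
  ring

structure KerEvalBijective (B : Matrix n n ℝ) (w : n) : Prop where
  injective : ∀ x, B *ᵥ x = 0 → x w = 0 → x = 0
  exists_eq_one : ∃ z, B *ᵥ z = 0 ∧ z w = 1

variable [DecidableEq n]

theorem Matrix.IsSymm.posDef_add_smul_one {P : Matrix n n ℝ} (hP : P.IsSymm)
    (hP1 : ∀ i j, |P i j| ≤ 1) : (P + ((Fintype.card n : ℝ) + 1) • (1 : Matrix n n ℝ)).PosDef := by
  refine .of_dotProduct_mulVec_pos (isHermitian_iff_isSymm.2 (hP.add (isSymm_one.smul _)))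
    fun x hx => ?_
  have hxx : 0 < star x ⬝ᵥ x := dotProduct_star_self_pos_iff.2 hx
  have hterm : ∀ i j, -(x i ^ 2 + x j ^ 2) / 2 ≤ x i * (P i j * x j) := fun i j => by
    obtain ⟨h₁, h₂⟩ := abs_le.1 (hP1 i j)
    nlinarith [mul_nonneg (neg_le_iff_add_nonneg.1 h₁) (sq_nonneg (x i + x j)),
      mul_nonneg (sub_nonneg.2 h₂) (sq_nonneg (x i - x j))]
  have hsum : ∑ i, ∑ j, -(x i ^ 2 + x j ^ 2) / 2 = -(Fintype.card n * (star x ⬝ᵥ x)) := by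
    simp only [dotProduct, star_trivial, ← sq, neg_div, add_div, Finset.sum_neg_distrib,
      Finset.sum_add_distrib, Finset.sum_const, Finset.card_univ, nsmul_eq_mul, ← Finset.sum_div,
      ← Finset.mul_sum]
    ring
  have hquad : -(Fintype.card n * (star x ⬝ᵥ x)) ≤ star x ⬝ᵥ P *ᵥ x := by
    rw [← hsum]
    simp only [dotProduct, mulVec, star_trivial, Finset.mul_sum]
    exact Finset.sum_le_sum fun i _ => Finset.sum_le_sum fun j _ => hterm i j
  rw [add_mulVec, dotProduct_add, smul_mulVec, one_mulVec, dotProduct_smul, smul_eq_mul]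
  nlinarith

theorem Matrix.PosDef.exists_kerEvalBijective_sub_diagonal {C : Matrix n n ℝ} (hC : C.PosDef)
    (w : n) : ∃ t, 0 < t ∧ (C - diagonal (Pi.single w t)).PosSemidef ∧
      KerEvalBijective (C - diagonal (Pi.single w t)) w := by
  obtain ⟨y, hy⟩ : ∃ y, C *ᵥ y = Pi.single w 1 :=
    ⟨C⁻¹ *ᵥ Pi.single w 1, by
      rw [mulVec_mulVec, mul_nonsing_inv _ ((isUnit_iff_isUnit_det C).1 hC.isUnit), one_mulVec]⟩
  have hyw : 0 < y w := by
    have hy0 : y ≠ 0 := by rintro rfl; simpa [eq_comm] using congrFun hy w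
    simpa [hy] using hC.dotProduct_mulVec_pos hy0
  set t := (y w)⁻¹
  set z := t • y
  have hzw : z w = 1 := by simp [z, t, hyw.ne']
  have hCz : C *ᵥ z = Pi.single w t := by
    rw [mulVec_smul, hy, ← Pi.single_smul, smul_eq_mul, mul_one]
  have hCsymm : Cᵀ = C := isHermitian_iff_isSymm.1 hC.isHermitian
  have hdiag : ∀ x : n → ℝ, diagonal (Pi.single w t) *ᵥ x = Pi.single w (t * x w) := fun x => by
    ext i; rw [mulVec_diagonal]; by_cases h : i = w <;> simp [h]
  have hquad : ∀ x : n → ℝ, star x ⬝ᵥ (C - diagonal (Pi.single w t)) *ᵥ x =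
      star (x - x w • z) ⬝ᵥ C *ᵥ (x - x w • z) := fun x => by
    have hzx : z ⬝ᵥ C *ᵥ x = t * x w := by
      rw [dotProduct_mulVec, ← mulVec_transpose, hCsymm, hCz, dotProduct_comm]; simp [mul_comm]
    simp only [star_trivial, sub_mulVec, mulVec_sub, mulVec_smul, hCz, hdiag, dotProduct_sub,
      sub_dotProduct, smul_dotProduct, dotProduct_smul, hzx, smul_eq_mul, dotProduct_single,
      Pi.sub_apply, Pi.smul_apply, hzw]
    ring
  have hB : (C - diagonal (Pi.single w t)).PosSemidef :=
    .of_dotProduct_mulVec_nonneg (hC.isHermitian.sub (isHermitian_diagonal_of_self_adjoint _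
      (by simp [IsSelfAdjoint]))) fun x => hquad x ▸ hC.posSemidef.dotProduct_mulVec_nonneg _
  refine ⟨t, inv_pos.2 hyw, hB, ⟨fun x hx hxw => ?_, z, ?_, hzw⟩⟩
  · have h0 := (hB.dotProduct_mulVec_zero_iff x).2 hx
    rw [hquad, hxw, zero_smul, sub_zero] at h0
    by_contra hne
    exact (hC.dotProduct_mulVec_pos hne).ne' h0
  · rw [sub_mulVec, hCz, hdiag, hzw, mul_one, sub_self]

theorem Matrix.PosSemidef.exists_kerEvalBijective_sub_diagonal {B : Matrix n n ℝ}
    (hB : B.PosSemidef) {w : n} (hinj : ∀ x, B *ᵥ x = 0 → x w = 0 → x = 0) :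
    ∃ t, 0 ≤ t ∧ (B - diagonal (Pi.single w t)).PosSemidef ∧
      KerEvalBijective (B - diagonal (Pi.single w t)) w := by
  by_cases hz : ∃ z, B *ᵥ z = 0 ∧ z w ≠ 0
  · obtain ⟨z, hBz, hzw⟩ := hz
    refine ⟨0, le_rfl, ?_⟩
    rw [Pi.single_zero, show diagonal (0 : n → ℝ) = 0 from diagonal_zero, sub_zero]
    exact ⟨hB, hinj, (z w)⁻¹ • z, by rw [mulVec_smul, hBz, smul_zero], by simp [hzw]⟩
  · simp only [not_exists, not_and, not_not] at hz
    have hBinj : Function.Injective B.mulVecLin :=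
      (injective_iff_map_eq_zero _).2 fun x hx => hinj x hx (hz x hx)
    obtain ⟨t, ht, h⟩ := (hB.posDef_iff_isUnit.2 (mulVec_injective_iff_isUnit.1 hBinj)
      ).exists_kerEvalBijective_sub_diagonal w
    exact ⟨t, ht.le, h⟩

end RealMatrix

section SignPattern

variable {V : Type*} (Ge Go : SimpleGraph V)

def SignCompatible (i j : V) (a : ℝ) : Prop :=
  ((Ge.Adj i j ∧ ¬ Go.Adj i j) → a < 0) ∧
    ((Go.Adj i j ∧ ¬ Ge.Adj i j) → 0 < a) ∧
    ((i ≠ j ∧ ¬ Ge.Adj i j ∧ ¬ Go.Adj i j) → a = 0)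

variable {Ge Go}

theorem mem_signedSet_iff {A : Matrix V V ℝ} :
    A ∈ SignedSet Ge Go ↔ A.IsSymm ∧ ∀ i j, SignCompatible Ge Go i j (A i j) :=
  Iff.rfl

theorem signCompatible_self (i : V) (a : ℝ) : SignCompatible Ge Go i i a :=
  ⟨fun h => (h.1.ne rfl).elim, fun h => (h.1.ne rfl).elim, fun h => (h.1 rfl).elim⟩

theorem signCompatible_zero {i j : V} (h : ¬ (Ge ⊔ Go).Adj i j) : SignCompatible Ge Go i j 0 := by
  simp only [SimpleGraph.sup_adj, not_or] at h
  exact ⟨fun h' => (h.1 h'.1).elim, fun h' => (h.2 h'.1).elim, fun _ => rfl⟩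

theorem signCompatible_comap_iff {W : Type*} {f : W → V} (hf : f.Injective) (i j : W) (a : ℝ) :
    SignCompatible (Ge.comap f) (Go.comap f) i j a ↔ SignCompatible Ge Go (f i) (f j) a := by
  simp only [SignCompatible, SimpleGraph.comap_adj, hf.ne_iff]

theorem mem_signedSet_comap_iff {W : Type*} {f : W → V} (hf : f.Injective) {B : Matrix W W ℝ} :
    B ∈ SignedSet (Ge.comap f) (Go.comap f) ↔
      B.IsSymm ∧ ∀ i j, i ≠ j → SignCompatible Ge Go (f i) (f j) (B i j) := by
  refine and_congr_right fun _ => ⟨fun h i j _ => (signCompatible_comap_iff hf i j _).1 (h i j),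
    fun h i j => ?_⟩
  obtain rfl | hij := eq_or_ne i j
  · exact signCompatible_self i _
  · exact (signCompatible_comap_iff hf i j _).2 (h i j hij)

theorem add_diagonal_mem_signedSet [DecidableEq V] {A : Matrix V V ℝ} (hA : A ∈ SignedSet Ge Go)
    (d : V → ℝ) : A + Matrix.diagonal d ∈ SignedSet Ge Go := by
  refine ⟨hA.1.add (Matrix.isSymm_diagonal d), fun i j => ?_⟩
  obtain rfl | hij := eq_or_ne i j
  · exact signCompatible_self i _
  · simpa [Matrix.diagonal_apply_ne _ hij] using hA.2 i j

variable (Ge Go) in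
def signMatrix [DecidableRel Ge.Adj] [DecidableRel Go.Adj] : Matrix V V ℝ :=
  Matrix.of fun i j =>
    if Ge.Adj i j ∧ ¬ Go.Adj i j then -1 else if Go.Adj i j ∧ ¬ Ge.Adj i j then 1 else 0

theorem signMatrix_mem_signedSet [DecidableRel Ge.Adj] [DecidableRel Go.Adj] :
    signMatrix Ge Go ∈ SignedSet Ge Go := by
  refine ⟨Matrix.IsSymm.ext fun i j => ?_, fun i j => ⟨?_, ?_, ?_⟩⟩
  · simp only [signMatrix, Matrix.of_apply, Ge.adj_comm, Go.adj_comm]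
  all_goals intro h; simp [signMatrix, h]

theorem signMatrix_abs_le_one [DecidableRel Ge.Adj] [DecidableRel Go.Adj] (i j : V) :
    |signMatrix Ge Go i j| ≤ 1 := by
  simp only [signMatrix, of_apply]
  split_ifs <;> simp

variable (Ge Go) in
theorem exists_posDef_mem_signedSet [Fintype V] :
    ∃ C ∈ SignedSet Ge Go, C.PosDef := by
  classical
  refine ⟨signMatrix Ge Go + ((Fintype.card V : ℝ) + 1) • (1 : Matrix V V ℝ), ?_,
    signMatrix_mem_signedSet.1.posDef_add_smul_one signMatrix_abs_le_one⟩
  rw [smul_one_eq_diagonal]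
  exact add_diagonal_mem_signedSet signMatrix_mem_signedSet _

end SignPattern

section ExtendByZero

variable {V : Type*} [DecidableEq V] (W : Finset V)

def Finset.extendByZero (y : W → ℝ) : V → ℝ := fun i => if h : i ∈ W then y ⟨i, h⟩ else 0

def Matrix.extendByZero (B : Matrix W W ℝ) : Matrix V V ℝ :=
  of fun i j => if h : i ∈ W ∧ j ∈ W then B ⟨i, h.1⟩ ⟨j, h.2⟩ else 0

variable {W}

theorem Finset.extendByZero_apply_of_mem (y : W → ℝ) {i : V} (h : i ∈ W) :
    W.extendByZero y i = y ⟨i, h⟩ := dif_pos h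

theorem Finset.extendByZero_apply_of_notMem (y : W → ℝ) {i : V} (h : i ∉ W) :
    W.extendByZero y i = 0 := dif_neg h

@[simp]
theorem Finset.restrict_extendByZero (y : W → ℝ) : W.restrict (W.extendByZero y) = y :=
  funext fun k => Finset.extendByZero_apply_of_mem y k.2

theorem Matrix.extendByZero_apply_of_mem (B : Matrix W W ℝ) {i j : V} (hi : i ∈ W) (hj : j ∈ W) :
    Matrix.extendByZero W B i j = B ⟨i, hi⟩ ⟨j, hj⟩ := dif_pos ⟨hi, hj⟩

theorem Matrix.extendByZero_apply_eq_zero (B : Matrix W W ℝ) {i j : V}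
    (h : ¬(i ∈ W ∧ j ∈ W)) : Matrix.extendByZero W B i j = 0 := dif_neg h

theorem Matrix.IsSymm.extendByZero {B : Matrix W W ℝ} (hB : B.IsSymm) :
    (Matrix.extendByZero W B).IsSymm := by
  refine IsSymm.ext fun i j => ?_
  by_cases h : j ∈ W ∧ i ∈ W
  · rw [Matrix.extendByZero_apply_of_mem _ h.1 h.2, Matrix.extendByZero_apply_of_mem _ h.2 h.1,
      hB.apply]
  · rw [Matrix.extendByZero_apply_eq_zero _ h,
      Matrix.extendByZero_apply_eq_zero _ (fun h' => h h'.symm)]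

theorem Matrix.extendByZero_add (B C : Matrix W W ℝ) :
    Matrix.extendByZero W (B + C) = Matrix.extendByZero W B + Matrix.extendByZero W C := by
  ext i j
  simp only [Matrix.extendByZero, of_apply, Matrix.add_apply]
  split_ifs <;> simp

theorem Matrix.extendByZero_neg (B : Matrix W W ℝ) :
    Matrix.extendByZero W (-B) = -Matrix.extendByZero W B := by
  ext i j
  simp only [Matrix.extendByZero, of_apply, Matrix.neg_apply]
  split_ifs <;> simp

theorem Matrix.extendByZero_diagonal_single {w : V} (hw : w ∈ W) (t : ℝ) :
    Matrix.extendByZero W (diagonal (Pi.single ⟨w, hw⟩ t)) = diagonal (Pi.single w t) := by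
  ext i j
  by_cases h : i ∈ W ∧ j ∈ W
  · rw [Matrix.extendByZero_apply_of_mem _ h.1 h.2]
    by_cases hij : i = j
    · subst hij
      by_cases hi : i = w <;> simp [hi]
    · simp [hij]
  · rw [Matrix.extendByZero_apply_eq_zero _ h]
    by_cases hij : i = j
    · subst hij
      have hi : i ≠ w := fun hi => h ⟨hi ▸ hw, hi ▸ hw⟩
      simp [hi]
    · simp [hij]

theorem Matrix.extendByZero_gram {F : Type*} [SeminormedAddCommGroup F] [InnerProductSpace ℝ F]
    {f : V → F} (hf : ∀ i ∉ W, f i = 0) :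
    Matrix.extendByZero W (gram ℝ fun k : W => f k) = gram ℝ f := by
  ext i j
  by_cases h : i ∈ W ∧ j ∈ W
  · rw [Matrix.extendByZero_apply_of_mem _ h.1 h.2, gram_apply, gram_apply]
  · rw [Matrix.extendByZero_apply_eq_zero _ h, gram_apply]
    rcases not_and_or.1 h with hi | hj
    · rw [hf i hi, inner_zero_left]
    · rw [hf j hj, inner_zero_right]

variable [Fintype V]

theorem Finset.sum_extendByZero (y : W → ℝ) : ∑ i, W.extendByZero y i = ∑ k, y k := by
  rw [← Finset.sum_subset (Finset.subset_univ W) fun i _ hi =>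
    Finset.extendByZero_apply_of_notMem y hi, ← Finset.sum_coe_sort W]
  exact Finset.sum_congr rfl fun k _ => Finset.extendByZero_apply_of_mem y k.2

theorem Matrix.mulVec_extendByZero (B : Matrix W W ℝ) (x : V → ℝ) :
    Matrix.extendByZero W B *ᵥ x = W.extendByZero (B *ᵥ W.restrict x) := by
  ext i
  by_cases hi : i ∈ W
  · rw [Finset.extendByZero_apply_of_mem _ hi, mulVec, dotProduct, mulVec, dotProduct,
      ← Finset.sum_extendByZero]
    congr 1 with j
    by_cases hj : j ∈ W
    · simp [Matrix.extendByZero_apply_of_mem _ hi hj, Finset.extendByZero_apply_of_mem _ hj]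
    · simp [Matrix.extendByZero_apply_eq_zero _ (fun h => hj h.2),
        Finset.extendByZero_apply_of_notMem _ hj]
  · simp [Finset.extendByZero_apply_of_notMem _ hi, mulVec, dotProduct,
      Matrix.extendByZero_apply_eq_zero _ (fun h => hi h.1)]

theorem dotProduct_extendByZero (x : V → ℝ) (y : W → ℝ) :
    x ⬝ᵥ W.extendByZero y = W.restrict x ⬝ᵥ y := by
  rw [dotProduct, dotProduct, ← Finset.sum_extendByZero]
  congr 1 with i
  by_cases hi : i ∈ W
  · simp [Finset.extendByZero_apply_of_mem _ hi]
  · simp [Finset.extendByZero_apply_of_notMem _ hi]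

theorem Matrix.PosSemidef.extendByZero {B : Matrix W W ℝ} (hB : B.PosSemidef) :
    (Matrix.extendByZero W B).PosSemidef := by
  refine .of_dotProduct_mulVec_nonneg
    (isHermitian_iff_isSymm.2 (isHermitian_iff_isSymm.1 hB.isHermitian).extendByZero) fun x => ?_
  simpa [Matrix.mulVec_extendByZero, dotProduct_extendByZero] using
    hB.dotProduct_mulVec_nonneg (W.restrict x)

theorem Matrix.extendByZero_mulVec_eq_zero_iff (B : Matrix W W ℝ) (x : V → ℝ) :
    Matrix.extendByZero W B *ᵥ x = 0 ↔ B *ᵥ W.restrict x = 0 := by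
  rw [Matrix.mulVec_extendByZero]
  refine ⟨fun h => ?_, fun h => by rw [h]; ext i; simp [Finset.extendByZero]⟩
  rw [← Finset.restrict_extendByZero (B *ᵥ _), h]
  rfl

end ExtendByZero

section OneSum

variable {V : Type*} [DecidableEq V] {W₁ W₂ : Finset V}

variable (W₁ W₂) in
def oneSum (B₁ : Matrix W₁ W₁ ℝ) (B₂ : Matrix W₂ W₂ ℝ) : Matrix V V ℝ :=
  Matrix.extendByZero W₁ B₁ + Matrix.extendByZero W₂ B₂

theorem oneSum_comm (B₁ : Matrix W₁ W₁ ℝ) (B₂ : Matrix W₂ W₂ ℝ) :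
    oneSum W₁ W₂ B₁ B₂ = oneSum W₂ W₁ B₂ B₁ := add_comm _ _

theorem oneSum_apply_eq_zero (B₁ : Matrix W₁ W₁ ℝ) (B₂ : Matrix W₂ W₂ ℝ) {i j : V}
    (h₁ : ¬(i ∈ W₁ ∧ j ∈ W₁)) (h₂ : ¬(i ∈ W₂ ∧ j ∈ W₂)) : oneSum W₁ W₂ B₁ B₂ i j = 0 := by
  rw [oneSum, Matrix.add_apply, Matrix.extendByZero_apply_eq_zero _ h₁,
    Matrix.extendByZero_apply_eq_zero _ h₂, add_zero]

variable [Fintype V]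

structure IsOneSplit (W₁ W₂ : Finset V) (v : V) : Prop where
  union_eq : W₁ ∪ W₂ = Finset.univ
  inter_eq : W₁ ∩ W₂ = {v}

structure IsOneSeparation (G : SimpleGraph V) (W₁ W₂ : Finset V) (v : V) : Prop
    extends IsOneSplit W₁ W₂ v where
  adj : ∀ i j, G.Adj i j → (i ∈ W₁ ∧ j ∈ W₁) ∨ (i ∈ W₂ ∧ j ∈ W₂)

variable {v : V}

namespace IsOneSplit

theorem symm (hS : IsOneSplit W₁ W₂ v) : IsOneSplit W₂ W₁ v :=
  ⟨by rw [Finset.union_comm, hS.union_eq], by rw [Finset.inter_comm, hS.inter_eq]⟩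

theorem mem_inter_iff (hS : IsOneSplit W₁ W₂ v) {i : V} : i ∈ W₁ ∧ i ∈ W₂ ↔ i = v := by
  rw [← Finset.mem_inter, hS.inter_eq, Finset.mem_singleton]

theorem mem_left (hS : IsOneSplit W₁ W₂ v) : v ∈ W₁ := (hS.mem_inter_iff.2 rfl).1

theorem mem_right (hS : IsOneSplit W₁ W₂ v) : v ∈ W₂ := (hS.mem_inter_iff.2 rfl).2

theorem eq_of_mem (hS : IsOneSplit W₁ W₂ v) {i : V} (h₁ : i ∈ W₁) (h₂ : i ∈ W₂) : i = v :=
  hS.mem_inter_iff.1 ⟨h₁, h₂⟩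

theorem mem_right_of_notMem_left (hS : IsOneSplit W₁ W₂ v) {i : V} (h : i ∉ W₁) : i ∈ W₂ := by
  have hi : i ∈ W₁ ∪ W₂ := hS.union_eq ▸ Finset.mem_univ i
  exact (Finset.mem_union.1 hi).resolve_left h

end IsOneSplit

theorem IsOneSeparation.symm {G : SimpleGraph V} (hS : IsOneSeparation G W₁ W₂ v) :
    IsOneSeparation G W₂ W₁ v :=
  ⟨hS.toIsOneSplit.symm, fun i j h => (hS.adj i j h).symm⟩

theorem IsOneSplit.oneSum_apply_left (hS : IsOneSplit W₁ W₂ v) (B₁ : Matrix W₁ W₁ ℝ)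
    (B₂ : Matrix W₂ W₂ ℝ) {i j : V} (hi : i ∈ W₁) (hj : j ∈ W₁) (hij : i ≠ j) :
    oneSum W₁ W₂ B₁ B₂ i j = B₁ ⟨i, hi⟩ ⟨j, hj⟩ := by
  rw [oneSum, Matrix.add_apply, Matrix.extendByZero_apply_of_mem _ hi hj,
    Matrix.extendByZero_apply_eq_zero _
      fun h => hij ((hS.eq_of_mem hi h.1).trans (hS.eq_of_mem hj h.2).symm), add_zero]

theorem Matrix.PosSemidef.oneSum {B₁ : Matrix W₁ W₁ ℝ} {B₂ : Matrix W₂ W₂ ℝ}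
    (hB₁ : B₁.PosSemidef) (hB₂ : B₂.PosSemidef) : (oneSum W₁ W₂ B₁ B₂).PosSemidef :=
  hB₁.extendByZero.add hB₂.extendByZero

theorem oneSum_mulVec_eq_zero_iff {B₁ : Matrix W₁ W₁ ℝ} {B₂ : Matrix W₂ W₂ ℝ}
    (hB₁ : B₁.PosSemidef) (hB₂ : B₂.PosSemidef) {x : V → ℝ} :
    oneSum W₁ W₂ B₁ B₂ *ᵥ x = 0 ↔ B₁ *ᵥ W₁.restrict x = 0 ∧ B₂ *ᵥ W₂.restrict x = 0 := by
  rw [oneSum, hB₁.extendByZero.add_mulVec_eq_zero_iff hB₂.extendByZero,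
    Matrix.extendByZero_mulVec_eq_zero_iff, Matrix.extendByZero_mulVec_eq_zero_iff]

end OneSum

section SignedOneSum

variable {V : Type*} [Fintype V] [DecidableEq V] {Ge Go : SimpleGraph V} {W₁ W₂ : Finset V}
  {v : V}

theorem IsOneSplit.oneSum_apply_right (hS : IsOneSplit W₁ W₂ v) (B₁ : Matrix W₁ W₁ ℝ)
    (B₂ : Matrix W₂ W₂ ℝ) {i j : V} (hi : i ∈ W₂) (hj : j ∈ W₂) (hij : i ≠ j) :
    oneSum W₁ W₂ B₁ B₂ i j = B₂ ⟨i, hi⟩ ⟨j, hj⟩ := by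
  rw [oneSum_comm]
  exact hS.symm.oneSum_apply_left B₂ B₁ hi hj hij

theorem IsOneSeparation.oneSum_mem_signedSet_iff (hS : IsOneSeparation (Ge ⊔ Go) W₁ W₂ v)
    {B₁ : Matrix W₁ W₁ ℝ} {B₂ : Matrix W₂ W₂ ℝ} (h₁ : B₁.IsSymm) (h₂ : B₂.IsSymm) :
    oneSum W₁ W₂ B₁ B₂ ∈ SignedSet Ge Go ↔
      B₁ ∈ SignedSet (Ge.comap Subtype.val) (Go.comap Subtype.val) ∧
        B₂ ∈ SignedSet (Ge.comap Subtype.val) (Go.comap Subtype.val) := by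
  have hsymm : (oneSum W₁ W₂ B₁ B₂).IsSymm := h₁.extendByZero.add h₂.extendByZero
  simp only [mem_signedSet_iff, mem_signedSet_comap_iff Subtype.val_injective, hsymm, h₁, h₂,
    true_and]
  refine ⟨fun h => ⟨fun i j hij => ?_, fun i j hij => ?_⟩, fun ⟨h₁, h₂⟩ i j => ?_⟩
  · simpa [hS.oneSum_apply_left B₁ B₂ i.2 j.2 (Subtype.val_injective.ne hij)] using h i j
  · simpa [hS.oneSum_apply_right B₁ B₂ i.2 j.2 (Subtype.val_injective.ne hij)] using h i j
  obtain rfl | hij := eq_or_ne i j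
  · exact signCompatible_self i _
  by_cases hi₁ : i ∈ W₁ ∧ j ∈ W₁
  · rw [hS.oneSum_apply_left B₁ B₂ hi₁.1 hi₁.2 hij]
    exact h₁ ⟨i, hi₁.1⟩ ⟨j, hi₁.2⟩ (by simpa using hij)
  by_cases hi₂ : i ∈ W₂ ∧ j ∈ W₂
  · rw [hS.oneSum_apply_right B₁ B₂ hi₂.1 hi₂.2 hij]
    exact h₂ ⟨i, hi₂.1⟩ ⟨j, hi₂.2⟩ (by simpa using hij)
  rw [oneSum_apply_eq_zero B₁ B₂ hi₁ hi₂]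
  exact signCompatible_zero fun hadj => (hS.adj i j hadj).elim hi₁ hi₂

theorem IsOneSplit.oneSum_add_sub_diagonal_single (hS : IsOneSplit W₁ W₂ v)
    (B₁ : Matrix W₁ W₁ ℝ) (B₂ : Matrix W₂ W₂ ℝ) (t : ℝ) :
    oneSum W₁ W₂ (B₁ + diagonal (Pi.single ⟨v, hS.mem_left⟩ t))
      (B₂ - diagonal (Pi.single ⟨v, hS.mem_right⟩ t)) = oneSum W₁ W₂ B₁ B₂ := by
  simp only [oneSum, sub_eq_add_neg, Matrix.extendByZero_add, Matrix.extendByZero_neg,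
    Matrix.extendByZero_diagonal_single]
  abel

/-- With `A` the Gram matrix of vectors `gᵢ`, the vectors indexed outside `W₂` are orthogonal to
the span `U` of those indexed outside `W₁`; projecting all `gᵢ` onto `Uᗮ` and `U` splits `A`. -/
theorem exists_posSemidef_oneSum_eq {A : Matrix V V ℝ} (hA : A.PosSemidef)
    (hcross : ∀ i j, i ∉ W₂ → j ∉ W₁ → A i j = 0) :
    ∃ (B₁ : Matrix W₁ W₁ ℝ) (B₂ : Matrix W₂ W₂ ℝ),
      B₁.PosSemidef ∧ B₂.PosSemidef ∧ oneSum W₁ W₂ B₁ B₂ = A := by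
  obtain ⟨g, rfl⟩ := hA.exists_eq_gram
  set U := Submodule.span ℝ (g '' {j | j ∉ W₁})
  have hU : ∀ j ∉ W₁, g j ∈ U := fun j hj => Submodule.subset_span ⟨j, hj, rfl⟩
  have hUperp : ∀ i ∉ W₂, g i ∈ Uᗮ := fun i hi =>
    Submodule.isOrtho_iff_le.1 (Submodule.isOrtho_span.2 ?_) (Submodule.mem_span_singleton_self _)
  · refine ⟨gram ℝ fun k : W₁ => Uᗮ.starProjection (g k),
      gram ℝ fun k : W₂ => U.starProjection (g k), posSemidef_gram ℝ _, posSemidef_gram ℝ _, ?_⟩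
    rw [oneSum, Matrix.extendByZero_gram fun i hi =>
        Submodule.starProjection_orthogonal_apply_eq_zero (hU i hi),
      Matrix.extendByZero_gram fun i hi => (U.starProjection_apply_eq_zero_iff).2 (hUperp i hi),
      add_comm, gram_add_gram_starProjection_orthogonal]
  · rintro _ rfl _ ⟨j, hj, rfl⟩
    exact hcross i j hi hj

end SignedOneSum

section Glue

variable {V : Type*} [Fintype V] [DecidableEq V] {W₁ W₂ : Finset V} {v : V}

namespace IsOneSplit

def retract (hS : IsOneSplit W₁ W₂ v) (i : V) : W₁ :=
  if h : i ∈ W₁ then ⟨i, h⟩ else ⟨v, hS.mem_left⟩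

/-- The matrix of `x ↦ (x on W₁, x v • z on W₂ \ {v})`. -/
def glue (hS : IsOneSplit W₁ W₂ v) (z : W₂ → ℝ) : Matrix V W₁ ℝ :=
  of fun i => Pi.single (hS.retract i) (if i ∈ W₁ then 1 else W₂.extendByZero z i)

variable (hS : IsOneSplit W₁ W₂ v) (z : W₂ → ℝ)

theorem retract_of_mem {i : V} (h : i ∈ W₁) : hS.retract i = ⟨i, h⟩ := dif_pos h

theorem glue_mulVec_apply (x : W₁ → ℝ) (i : V) :
    (hS.glue z *ᵥ x) i = (if i ∈ W₁ then 1 else W₂.extendByZero z i) * x (hS.retract i) :=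
  single_dotProduct _ _ _

theorem glue_mul_mul_transpose_apply (Y : Matrix W₁ W₁ ℝ) (i j : V) :
    (hS.glue z * Y * (hS.glue z)ᵀ) i j =
      (if i ∈ W₁ then 1 else W₂.extendByZero z i) * (if j ∈ W₁ then 1 else W₂.extendByZero z j) *
        Y (hS.retract i) (hS.retract j) := by
  simp [mul_apply, glue, Pi.single_apply, ite_mul, mul_ite, Finset.sum_ite_eq']
  split_ifs <;> ring

theorem restrict_glue_mulVec_left (x : W₁ → ℝ) : W₁.restrict (hS.glue z *ᵥ x) = x := by
  ext k
  simp [Finset.restrict, glue_mulVec_apply, hS.retract_of_mem k.2]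

theorem restrict_glue_mulVec_right (hz : z ⟨v, hS.mem_right⟩ = 1) (x : W₁ → ℝ) :
    W₂.restrict (hS.glue z *ᵥ x) = x ⟨v, hS.mem_left⟩ • z := by
  ext k
  simp only [Finset.restrict, glue_mulVec_apply, Pi.smul_apply, smul_eq_mul]
  by_cases hk : (k : V) ∈ W₁
  · obtain rfl : k = ⟨v, hS.mem_right⟩ := Subtype.ext (hS.eq_of_mem hk k.2)
    simp [hS.retract_of_mem hk, hS.mem_left, hz]
  · simp [hk, retract, Finset.extendByZero_apply_of_mem _ k.2, mul_comm]

end IsOneSplit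

end Glue

section TransversalSide

variable {V : Type*} [Fintype V] [DecidableEq V] {W₁ W₂ : Finset V} {v : V}
  {B₁ : Matrix W₁ W₁ ℝ} {B₂ : Matrix W₂ W₂ ℝ}

namespace IsOneSplit

theorem retract_of_mem_right (hS : IsOneSplit W₁ W₂ v) {i : V} (h : i ∈ W₂) :
    hS.retract i = ⟨v, hS.mem_left⟩ := by
  by_cases hi : i ∈ W₁
  · rw [hS.retract_of_mem hi]
    exact Subtype.ext (hS.eq_of_mem hi h)
  · exact dif_neg hi

theorem oneSum_mulVec_glue_eq_zero_iff (hS : IsOneSplit W₁ W₂ v) (hB₁ : B₁.PosSemidef)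
    (hB₂ : B₂.PosSemidef) {z : W₂ → ℝ} (hzv : z ⟨v, hS.mem_right⟩ = 1) (x : W₁ → ℝ) :
    oneSum W₁ W₂ B₁ B₂ *ᵥ (hS.glue z *ᵥ x) = 0 ↔
      B₁ *ᵥ x = 0 ∧ x ⟨v, hS.mem_left⟩ • (B₂ *ᵥ z) = 0 := by
  rw [oneSum_mulVec_eq_zero_iff hB₁ hB₂, hS.restrict_glue_mulVec_left,
    hS.restrict_glue_mulVec_right z hzv, mulVec_smul]

theorem glue_mulVec_restrict (hS : IsOneSplit W₁ W₂ v) (hB₁ : B₁.PosSemidef)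
    (hB₂ : B₂.PosSemidef) (hinj : ∀ y, B₂ *ᵥ y = 0 → y ⟨v, hS.mem_right⟩ = 0 → y = 0)
    {z : W₂ → ℝ} (hz : B₂ *ᵥ z = 0) (hzv : z ⟨v, hS.mem_right⟩ = 1) {x : V → ℝ}
    (hx : oneSum W₁ W₂ B₁ B₂ *ᵥ x = 0) : hS.glue z *ᵥ W₁.restrict x = x := by
  have hx₂ : W₂.restrict x = x v • z := by
    refine sub_eq_zero.1 (hinj _ ?_ (by simp [Finset.restrict, hzv]))
    rw [mulVec_sub, mulVec_smul, ((oneSum_mulVec_eq_zero_iff hB₁ hB₂).1 hx).2, hz, smul_zero,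
      sub_zero]
  ext i
  by_cases hi : i ∈ W₁
  · simp [glue_mulVec_apply, hi, hS.retract_of_mem hi]
  · have hi₂ := hS.mem_right_of_notMem_left hi
    simpa [glue_mulVec_apply, hi, hS.retract_of_mem_right hi₂,
      Finset.extendByZero_apply_of_mem _ hi₂, mul_comm] using (congrFun hx₂ ⟨i, hi₂⟩).symm

theorem matNullity_oneSum (hS : IsOneSplit W₁ W₂ v) (hB₁ : B₁.PosSemidef)
    (hB₂ : B₂.PosSemidef) (h₂ : KerEvalBijective B₂ ⟨v, hS.mem_right⟩) :
    matNullity (oneSum W₁ W₂ B₁ B₂) = matNullity B₁ := by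
  obtain ⟨z, hz, hzv⟩ := h₂.exists_eq_one
  refine le_antisymm (matNullity_le_of_injOn (LinearMap.funLeft ℝ ℝ Subtype.val)
    (fun x hx => ((oneSum_mulVec_eq_zero_iff hB₁ hB₂).1 hx).1) fun x hx h0 => ?_)
    (matNullity_le_of_injOn (hS.glue z).mulVecLin
      (fun x hx => (hS.oneSum_mulVec_glue_eq_zero_iff hB₁ hB₂ hzv x).2
        ⟨hx, by rw [hz, smul_zero]⟩) fun x _ h0 => ?_)
  · rw [← hS.glue_mulVec_restrict hB₁ hB₂ h₂.injective hz hzv hx]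
    exact (congrArg _ h0).trans (mulVec_zero _)
  · rw [← hS.restrict_glue_mulVec_left z x]
    exact (congrArg _ h0).trans rfl

end IsOneSplit

end TransversalSide

section StrongArnold

variable {V : Type*} [Fintype V] [DecidableEq V] {Ge Go : SimpleGraph V} {W₁ W₂ : Finset V}
  {v : V} {B₁ : Matrix W₁ W₁ ℝ} {B₂ : Matrix W₂ W₂ ℝ}

namespace IsOneSeparation

theorem retract_eq_or_adj {G : SimpleGraph V} (hS : IsOneSeparation G W₁ W₂ v) {i j : V}
    (h : G.Adj i j) : hS.retract i = hS.retract j ∨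
      (G.comap Subtype.val).Adj (hS.retract i) (hS.retract j) := by
  rcases hS.adj i j h with ⟨hi, hj⟩ | ⟨hi, hj⟩
  · right
    simpa [hS.retract_of_mem hi, hS.retract_of_mem hj] using h
  · left
    rw [hS.retract_of_mem_right hi, hS.retract_of_mem_right hj]

theorem hasSAP_of_hasSAP_oneSum (hS : IsOneSeparation (Ge ⊔ Go) W₁ W₂ v)
    (hB₁ : B₁.PosSemidef) (hB₂ : B₂.PosSemidef) {z : W₂ → ℝ} (hz : B₂ *ᵥ z = 0)
    (hzv : z ⟨v, hS.mem_right⟩ = 1) (hA : HasSAP Ge Go (oneSum W₁ W₂ B₁ B₂)) :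
    HasSAP (Ge.comap Subtype.val) (Go.comap Subtype.val) B₁ := by
  intro Y hY hYzero hBY
  set P := hS.glue z
  have hX := hA (P * Y * Pᵀ) ?_ ?_ ?_
  · ext k l
    simpa [P, hS.glue_mul_mul_transpose_apply, hS.retract_of_mem] using congrFun₂ hX k l
  · simp only [IsSymm, transpose_mul, transpose_transpose, hY.eq, Matrix.mul_assoc]
  · intro i j hij
    rw [hS.glue_mul_mul_transpose_apply, hYzero _ _ ?_, mul_zero]
    rcases hij with rfl | hij
    · exact Or.inl rfl
    · simpa using hS.retract_eq_or_adj hij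
  · rw [Matrix.mul_eq_zero_iff_forall_mulVec] at hBY
    rw [← Matrix.mul_assoc, ← Matrix.mul_assoc, Matrix.mul_assoc _ P,
      Matrix.mul_eq_zero_iff_forall_mulVec.2 fun k => ?_, Matrix.zero_mul]
    rw [← mulVec_mulVec, hS.oneSum_mulVec_glue_eq_zero_iff hB₁ hB₂ hzv]
    exact ⟨hBY k, by rw [hz, smul_zero]⟩

theorem hasSAP_oneSum_of_hasSAP (hS : IsOneSeparation (Ge ⊔ Go) W₁ W₂ v)
    (hB₁ : B₁.PosSemidef) (hB₂ : B₂.PosSemidef) (h₂ : KerEvalBijective B₂ ⟨v, hS.mem_right⟩)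
    (h₁ : HasSAP (Ge.comap Subtype.val) (Go.comap Subtype.val) B₁) :
    HasSAP Ge Go (oneSum W₁ W₂ B₁ B₂) := by
  intro X hX hXzero hAX
  obtain ⟨z, hz, hzv⟩ := h₂.exists_eq_one
  rw [Matrix.mul_eq_zero_iff_forall_mulVec] at hAX
  have hcol : ∀ j, hS.glue z *ᵥ W₁.restrict (X *ᵥ Pi.single j 1) = X *ᵥ Pi.single j 1 :=
    fun j => hS.glue_mulVec_restrict hB₁ hB₂ h₂.injective hz hzv (hAX j)
  have hY : X.submatrix Subtype.val Subtype.val = (0 : Matrix W₁ W₁ ℝ) := by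
    refine h₁ _ (hX.submatrix _) (fun k l hkl => hXzero k l ?_) ?_
    · rcases hkl with rfl | hkl
      · exact Or.inl rfl
      · exact Or.inr (by simpa using hkl)
    · refine Matrix.mul_eq_zero_iff_forall_mulVec.2 fun k => ?_
      have hk := ((oneSum_mulVec_eq_zero_iff hB₁ hB₂).1 (hAX k)).1
      convert hk using 2
      ext l
      simp [Finset.restrict]
  have hrestrict : ∀ j, W₁.restrict (X *ᵥ Pi.single j 1) = 0 := by
    intro j
    ext k
    have hk : W₁.restrict (X *ᵥ Pi.single (k : V) 1) = 0 := by
      ext l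
      simpa [Finset.restrict] using congrFun₂ hY l k
    have hXk : X *ᵥ Pi.single (k : V) 1 = 0 := by rw [← hcol, hk, mulVec_zero]
    simpa [Finset.restrict, hX.apply] using congrFun hXk j
  exact ext_of_mulVec_single fun j => by rw [← hcol, hrestrict, mulVec_zero, zero_mulVec]

end IsOneSeparation

end StrongArnold

section Dichotomy

variable {V : Type*} [Fintype V] [DecidableEq V] {Ge Go : SimpleGraph V} {W₁ W₂ : Finset V}
  {v : V} {B₁ : Matrix W₁ W₁ ℝ} {B₂ : Matrix W₂ W₂ ℝ}

theorem IsOneSplit.extendByZero_apply_of_mem_right (hS : IsOneSplit W₁ W₂ v) {x : W₁ → ℝ}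
    (hx : x ⟨v, hS.mem_left⟩ = 0) {i : V} (hi : i ∈ W₂) : W₁.extendByZero x i = 0 := by
  by_cases hi₁ : i ∈ W₁
  · obtain rfl := hS.eq_of_mem hi₁ hi
    rwa [Finset.extendByZero_apply_of_mem _ hi₁]
  · exact Finset.extendByZero_apply_of_notMem _ hi₁

theorem IsOneSplit.oneSum_mulVec_extendByZero_left (hS : IsOneSplit W₁ W₂ v)
    (hB₁ : B₁.PosSemidef) (hB₂ : B₂.PosSemidef) {x : W₁ → ℝ} (hx : B₁ *ᵥ x = 0)
    (hxv : x ⟨v, hS.mem_left⟩ = 0) : oneSum W₁ W₂ B₁ B₂ *ᵥ W₁.extendByZero x = 0 := by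
  refine (oneSum_mulVec_eq_zero_iff hB₁ hB₂).2 ⟨by rwa [Finset.restrict_extendByZero], ?_⟩
  convert mulVec_zero B₂
  ext k
  exact hS.extendByZero_apply_of_mem_right hxv k.2

theorem IsOneSeparation.kerEval_injective_or (hS : IsOneSeparation (Ge ⊔ Go) W₁ W₂ v)
    (hB₁ : B₁.PosSemidef) (hB₂ : B₂.PosSemidef) (hA : HasSAP Ge Go (oneSum W₁ W₂ B₁ B₂)) :
    (∀ x, B₁ *ᵥ x = 0 → x ⟨v, hS.mem_left⟩ = 0 → x = 0) ∨
      (∀ x, B₂ *ᵥ x = 0 → x ⟨v, hS.mem_right⟩ = 0 → x = 0) := by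
  by_contra! h
  obtain ⟨⟨x₁, hx₁, hx₁v, hx₁0⟩, ⟨x₂, hx₂, hx₂v, hx₂0⟩⟩ := h
  set e₁ := W₁.extendByZero x₁
  set e₂ := W₂.extendByZero x₂
  have he₁ : ∀ i ∈ W₂, e₁ i = 0 := fun i => hS.extendByZero_apply_of_mem_right hx₁v
  have he₂ : ∀ i ∈ W₁, e₂ i = 0 := fun i => hS.symm.extendByZero_apply_of_mem_right hx₂v
  have hX := hA (vecMulVec e₁ e₂ + vecMulVec e₂ e₁) ?_ ?_ ?_
  · obtain ⟨i, hi⟩ := Function.ne_iff.1 hx₁0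
    obtain ⟨j, hj⟩ := Function.ne_iff.1 hx₂0
    have hij := congrFun₂ hX i j
    rw [Matrix.add_apply, vecMulVec_apply, vecMulVec_apply, he₂ i i.2, zero_mul, add_zero,
      Matrix.zero_apply] at hij
    simp only [e₁, e₂, Finset.extendByZero_apply_of_mem _ i.2,
      Finset.extendByZero_apply_of_mem _ j.2] at hij
    exact mul_ne_zero hi hj hij
  · simp only [IsSymm, transpose_add, transpose_vecMulVec, add_comm]
  · intro i j hij
    have hside : (i ∈ W₁ ∧ j ∈ W₁) ∨ (i ∈ W₂ ∧ j ∈ W₂) := by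
      rcases hij with rfl | hij
      · by_cases hi : i ∈ W₁
        · exact Or.inl ⟨hi, hi⟩
        · exact Or.inr ⟨hS.mem_right_of_notMem_left hi, hS.mem_right_of_notMem_left hi⟩
      · exact hS.adj i j hij
    rcases hside with ⟨hi, hj⟩ | ⟨hi, hj⟩
    · simp [vecMulVec_apply, he₂ i hi, he₂ j hj]
    · simp [vecMulVec_apply, he₁ i hi, he₁ j hj]
  · rw [Matrix.mul_add, mul_vecMulVec, mul_vecMulVec,
      hS.oneSum_mulVec_extendByZero_left hB₁ hB₂ hx₁ hx₁v,
      oneSum_comm, hS.symm.oneSum_mulVec_extendByZero_left hB₂ hB₁ hx₂ hx₂v]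
    simp

end Dichotomy

section Nu

variable {V : Type*} [Fintype V] {Ge Go : SimpleGraph V}

theorem matNullity_le_nuSigned {A : Matrix V V ℝ} (hAS : A ∈ SignedSet Ge Go)
    (hA : A.PosSemidef) (hsap : HasSAP Ge Go A) : matNullity A ≤ nuSigned Ge Go :=
  le_csSup ⟨Fintype.card V, by rintro _ ⟨B, -, -, -, rfl⟩; exact matNullity_le_card B⟩
    ⟨A, hAS, hA, hsap, rfl⟩

theorem nuSigned_le {N : ℕ}
    (h : ∀ A ∈ SignedSet Ge Go, A.PosSemidef → HasSAP Ge Go A → matNullity A ≤ N) :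
    nuSigned Ge Go ≤ N :=
  csSup_le' fun _ ⟨A, hAS, hA, hsap, hN⟩ => hN ▸ h A hAS hA hsap

variable [DecidableEq V] {W₁ W₂ : Finset V} {v : V}

namespace IsOneSeparation

theorem nuSigned_comap_left_le (hS : IsOneSeparation (Ge ⊔ Go) W₁ W₂ v) :
    nuSigned (Ge.comap (Subtype.val : W₁ → V)) (Go.comap Subtype.val) ≤ nuSigned Ge Go := by
  refine nuSigned_le fun A₁ hA₁S hA₁ h₁ => ?_
  obtain ⟨C, hCS, hC⟩ := exists_posDef_mem_signedSet (Ge.comap (Subtype.val : W₂ → V))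
    (Go.comap Subtype.val)
  obtain ⟨t, -, hB, h₂⟩ := hC.exists_kerEvalBijective_sub_diagonal ⟨v, hS.mem_right⟩
  have hBS : C - diagonal (Pi.single ⟨v, hS.mem_right⟩ t) ∈
      SignedSet (Ge.comap (Subtype.val : W₂ → V)) (Go.comap Subtype.val) := by
    rw [sub_eq_add_neg, diagonal_neg]
    exact add_diagonal_mem_signedSet hCS _
  rw [← hS.matNullity_oneSum hA₁ hB h₂]
  exact matNullity_le_nuSigned
    ((hS.oneSum_mem_signedSet_iff (isHermitian_iff_isSymm.1 hA₁.isHermitian)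
      (isHermitian_iff_isSymm.1 hB.isHermitian)).2 ⟨hA₁S, hBS⟩)
    (hA₁.oneSum hB) (hS.hasSAP_oneSum_of_hasSAP hA₁ hB h₂ h₁)

theorem apply_eq_zero_of_mem_signedSet (hS : IsOneSeparation (Ge ⊔ Go) W₁ W₂ v) {A : Matrix V V ℝ}
    (hAS : A ∈ SignedSet Ge Go) {i j : V} (hi : i ∉ W₂) (hj : j ∉ W₁) : A i j = 0 := by
  have hij : i ≠ j := fun h => hi (hS.mem_right_of_notMem_left (h ▸ hj))
  refine (hAS.2 i j).2.2 ⟨hij, fun h => ?_, fun h => ?_⟩ <;>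
    rcases hS.adj i j (by simp [h]) with ⟨-, hj'⟩ | ⟨hi', -⟩
  exacts [hj hj', hi hi', hj hj', hi hi']

theorem matNullity_oneSum_le_nuSigned_comap_left (hS : IsOneSeparation (Ge ⊔ Go) W₁ W₂ v)
    {B₁ : Matrix W₁ W₁ ℝ} {B₂ : Matrix W₂ W₂ ℝ} (hB₁ : B₁.PosSemidef) (hB₂ : B₂.PosSemidef)
    (hAS : oneSum W₁ W₂ B₁ B₂ ∈ SignedSet Ge Go) (hsap : HasSAP Ge Go (oneSum W₁ W₂ B₁ B₂))
    (hinj : ∀ x, B₂ *ᵥ x = 0 → x ⟨v, hS.mem_right⟩ = 0 → x = 0) :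
    matNullity (oneSum W₁ W₂ B₁ B₂) ≤
      nuSigned (Ge.comap (Subtype.val : W₁ → V)) (Go.comap Subtype.val) := by
  obtain ⟨t, ht, hB₂', h₂⟩ := hB₂.exists_kerEvalBijective_sub_diagonal hinj
  obtain ⟨z, hz, hzv⟩ := h₂.exists_eq_one
  have hB₁' : (B₁ + diagonal (Pi.single (⟨v, hS.mem_left⟩ : W₁) t)).PosSemidef :=
    hB₁.add (PosSemidef.diagonal (Pi.single_nonneg.2 ht))
  have hB₁S := ((hS.oneSum_mem_signedSet_iff (isHermitian_iff_isSymm.1 hB₁.isHermitian)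
    (isHermitian_iff_isSymm.1 hB₂.isHermitian)).1 hAS).1
  rw [← hS.oneSum_add_sub_diagonal_single B₁ B₂ t] at hsap ⊢
  rw [hS.matNullity_oneSum hB₁' hB₂' h₂]
  exact matNullity_le_nuSigned (add_diagonal_mem_signedSet hB₁S _) hB₁'
    (hS.hasSAP_of_hasSAP_oneSum hB₁' hB₂' hz hzv hsap)

theorem matNullity_le_max (hS : IsOneSeparation (Ge ⊔ Go) W₁ W₂ v) {A : Matrix V V ℝ}
    (hAS : A ∈ SignedSet Ge Go) (hA : A.PosSemidef) (hsap : HasSAP Ge Go A) :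
    matNullity A ≤ max (nuSigned (Ge.comap (Subtype.val : W₁ → V)) (Go.comap Subtype.val))
      (nuSigned (Ge.comap (Subtype.val : W₂ → V)) (Go.comap Subtype.val)) := by
  obtain ⟨B₁, B₂, hB₁, hB₂, rfl⟩ :=
    exists_posSemidef_oneSum_eq hA fun i j hi hj => hS.apply_eq_zero_of_mem_signedSet hAS hi hj
  rcases hS.kerEval_injective_or hB₁ hB₂ hsap with h₁ | h₂
  · rw [oneSum_comm] at hAS hsap ⊢
    exact (hS.symm.matNullity_oneSum_le_nuSigned_comap_left hB₂ hB₁ hAS hsap h₁).trans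
      (le_max_right _ _)
  · exact (hS.matNullity_oneSum_le_nuSigned_comap_left hB₁ hB₂ hAS hsap h₂).trans
      (le_max_left _ _)

end IsOneSeparation

end Nu

/-- 1-split: if `V = V₁ ∪ V₂` with `V₁ ∩ V₂ = {v}` and every edge lies
within `V₁` or within `V₂`, then `ν` is the maximum of the `ν`'s of the two induced
signed graphs. -/
theorem stmt11 {V : Type*} [Fintype V] [DecidableEq V]
    (Ge Go : SimpleGraph V) (V₁ V₂ : Finset V) (v : V)
    (hunion : V₁ ∪ V₂ = Finset.univ) (hinter : V₁ ∩ V₂ = {v})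
    (hedges : ∀ i j, (Ge ⊔ Go).Adj i j → ((i ∈ V₁ ∧ j ∈ V₁) ∨ (i ∈ V₂ ∧ j ∈ V₂))) :
    nuSigned Ge Go =
      max (nuSigned (Ge.comap (Subtype.val : {x // x ∈ V₁} → V))
                    (Go.comap (Subtype.val : {x // x ∈ V₁} → V)))
          (nuSigned (Ge.comap (Subtype.val : {x // x ∈ V₂} → V))
                    (Go.comap (Subtype.val : {x // x ∈ V₂} → V))) := by
  have hS : IsOneSeparation (Ge ⊔ Go) V₁ V₂ v := ⟨⟨hunion, hinter⟩, hedges⟩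
  exact le_antisymm (nuSigned_le fun A hAS hA hsap => hS.matNullity_le_max hAS hA hsap)
    (max_le hS.nuSigned_comap_left_le hS.symm.nuSigned_comap_left_le)
end

section
/- Let (Ge, Go) be a signed graph on a finite vertex type V with at least 3 vertices. Suppose the union graph Ge ⊔ Go is 2-connected (it is connected and remains connected after deleting any single vertex), and suppose there exists a vertex v ∈ V such that the signed graph induced on V \ {v} is bipartite (i.e., (Ge, Go) is almost bipartite: v lies on every odd cycle). Then every positive semidefinite matrix A ∈ S(Ge, Go) has nullity at most 2; consequently ν(Ge, Go) ≤ M₊(Ge, Go) ≤ 2. -/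
open Matrix

/-! On `V \ {v}` the balancing set gives a `±1` signature `s` with `s i * s j = 1` on even and
`-1` on odd edges, so switching by `diagonal s` turns a positive semidefinite matrix of the
signed graph into a positive semidefinite matrix with nonpositive off-diagonal entries that are
negative along the edges. For such a matrix `B` we have `|z|ᵀ B |z| ≤ zᵀ B z`, so the kernel is
closed under taking absolute values, and a nonnegative kernel vector that vanishes at a vertex
vanishes at all its neighbours. Since `V \ {v}` is connected, a kernel vector of `A` vanishing
at `v` and at one more vertex `w` is zero, i.e. `x ↦ (x v, x w)` is injective on the kernel. -/

theorem SimpleGraph.Connected.forall_of_adj_imp {W : Type*} {G : SimpleGraph W}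
    (hG : G.Connected) {P : W → Prop} (hP : ∀ a b, G.Adj a b → P a → P b) {w : W} (hw : P w)
    (a : W) : P a := by
  induction (G.reachable_iff_reflTransGen w a).mp (hG w a) with
  | refl => exact hw
  | tail _ hab ih => exact hP _ _ hab ih

namespace Matrix

variable {W : Type*} [Fintype W] {B : Matrix W W ℝ}

theorem eq_zero_of_nonneg_of_mulVec_eq_zero {G : SimpleGraph W} (hG : G.Connected)
    (hoff : ∀ i j, i ≠ j → B i j ≤ 0) (hadj : ∀ i j, G.Adj i j → B i j < 0)
    {y : W → ℝ} (hy : ∀ i, 0 ≤ y i) (hBy : B *ᵥ y = 0) {w : W} (hw : y w = 0) : y = 0 := by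
  refine funext (hG.forall_of_adj_imp (fun a b hab hya => ?_) hw)
  have hterm : ∀ j ∈ Finset.univ, B a j * y j ≤ 0 := fun j _ => by
    rcases eq_or_ne a j with rfl | haj
    · simp [hya]
    · exact mul_nonpos_of_nonpos_of_nonneg (hoff a j haj) (hy j)
  have hrow : ∑ j, B a j * y j = 0 := congrFun hBy a
  have hab0 := (Finset.sum_eq_zero_iff_of_nonpos hterm).mp hrow b (Finset.mem_univ b)
  exact (mul_eq_zero.mp hab0).resolve_left (hadj a b hab).ne

theorem PosSemidef.mulVec_abs_eq_zero (hB : B.PosSemidef) (hoff : ∀ i j, i ≠ j → B i j ≤ 0)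
    {z : W → ℝ} (hz : B *ᵥ z = 0) : B *ᵥ |z| = 0 := by
  have hquad : ∀ u : W → ℝ, u ⬝ᵥ B *ᵥ u = ∑ i, ∑ j, B i j * (u i * u j) := fun u => by
    simp only [dotProduct, mulVec, Finset.mul_sum]
    exact Finset.sum_congr rfl fun i _ => Finset.sum_congr rfl fun j _ => by ring
  have hle : |z| ⬝ᵥ B *ᵥ |z| ≤ z ⬝ᵥ B *ᵥ z := by
    rw [hquad, hquad]
    refine Finset.sum_le_sum fun i _ => Finset.sum_le_sum fun j _ => ?_
    rcases eq_or_ne i j with rfl | hij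
    · simp [abs_mul_abs_self]
    · refine mul_le_mul_of_nonpos_left ?_ (hoff i j hij)
      simpa [abs_mul] using le_abs_self (z i * z j)
  rw [hz, dotProduct_zero] at hle
  refine (hB.dotProduct_mulVec_zero_iff |z|).mp ?_
  simpa using le_antisymm hle (by simpa using hB.dotProduct_mulVec_nonneg |z|)

theorem PosSemidef.eq_zero_of_mulVec_eq_zero {G : SimpleGraph W} (hG : G.Connected)
    (hB : B.PosSemidef) (hoff : ∀ i j, i ≠ j → B i j ≤ 0) (hadj : ∀ i j, G.Adj i j → B i j < 0)
    {z : W → ℝ} (hz : B *ᵥ z = 0) {w : W} (hw : z w = 0) : z = 0 := by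
  have habs := eq_zero_of_nonneg_of_mulVec_eq_zero hG hoff hadj (fun i => abs_nonneg (z i))
    (hB.mulVec_abs_eq_zero hoff hz) (w := w) (by simp [hw])
  exact funext fun i => abs_eq_zero.mp (congrFun habs i)

theorem submatrix_val_mulVec_comp_val {R : Type*} [NonUnitalNonAssocSemiring R]
    {p : W → Prop} [DecidablePred p] (A : Matrix W W R) {x : W → R}
    (hx : ∀ i, ¬ p i → x i = 0) :
    A.submatrix (Subtype.val : Subtype p → W) (Subtype.val : Subtype p → W) *ᵥ
      (x ∘ (Subtype.val : Subtype p → W)) = (A *ᵥ x) ∘ (Subtype.val : Subtype p → W) := by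
  funext i
  simp only [mulVec, dotProduct, submatrix_apply, Function.comp_apply]
  rw [← Fintype.sum_subtype_add_sum_subtype p,
    Finset.sum_eq_zero fun (j : {j // ¬ p j}) _ => by rw [hx j j.2, mul_zero], add_zero]

end Matrix

section SignedGraph

variable {V : Type*}

theorem IsBalanced.exists_signature {Ge Go : SimpleGraph V} (h : IsBalanced Ge Go) :
    ∃ s : V → ℝ, (∀ i, s i * s i = 1) ∧ (∀ i j, Ge.Adj i j → s i * s j = 1) ∧
      (∀ i j, Go.Adj i j → s i * s j = -1) := by
  classical
  obtain ⟨U, hodd, heven⟩ := h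
  refine ⟨fun i => if i ∈ U then -1 else 1, fun i => by dsimp only; split_ifs <;> norm_num,
    fun i j hij => ?_, fun i j hij => ?_⟩
  · have := heven i j hij
    dsimp only
    split_ifs <;> simp_all
  · have := hodd i j hij
    dsimp only
    split_ifs <;> simp_all

section Switching

variable {Ge Go : SimpleGraph V} {A : Matrix V V ℝ} (hA : A ∈ SignedSet Ge Go) {s : V → ℝ}
  (heven : ∀ i j, Ge.Adj i j → s i * s j = 1) (hodd : ∀ i j, Go.Adj i j → s i * s j = -1)
include hA heven hodd

theorem SignedSet.mul_apply_mul_neg {i j : V} (hij : (Ge ⊔ Go).Adj i j) :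
    s i * A i j * s j < 0 := by
  have hswap : s i * A i j * s j = A i j * (s i * s j) := by ring
  obtain ⟨hneg, hpos, -⟩ := hA.2 i j
  rcases hij with hij | hij
  · by_cases hij' : Go.Adj i j
    · linarith [heven i j hij, hodd i j hij']
    · rw [hswap, heven i j hij, mul_one]
      exact hneg ⟨hij, hij'⟩
  · by_cases hij' : Ge.Adj i j
    · linarith [heven i j hij', hodd i j hij]
    · rw [hswap, hodd i j hij, mul_neg_one, neg_neg_iff_pos]
      exact hpos ⟨hij, hij'⟩

theorem SignedSet.mul_apply_mul_nonpos {i j : V} (hij : i ≠ j) : s i * A i j * s j ≤ 0 := by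
  by_cases hadj : (Ge ⊔ Go).Adj i j
  · exact (SignedSet.mul_apply_mul_neg hA heven hodd hadj).le
  · simp only [SimpleGraph.sup_adj, not_or] at hadj
    simp [(hA.2 i j).2.2 ⟨hij, hadj⟩]

end Switching

theorem IsBalanced.eq_zero_of_mulVec_eq_zero [Fintype V] [DecidableEq V] {Ge Go : SimpleGraph V}
    (hbal : IsBalanced Ge Go) (hconn : (Ge ⊔ Go).Connected) {A : Matrix V V ℝ}
    (hA : A ∈ SignedSet Ge Go) (hpsd : A.PosSemidef) {x : V → ℝ} (hx : A *ᵥ x = 0) {w : V}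
    (hw : x w = 0) : x = 0 := by
  obtain ⟨s, hss, heven, hodd⟩ := hbal.exists_signature
  set D := diagonal s
  have hDD : D * D = 1 := by
    rw [diagonal_mul_diagonal, ← diagonal_one]
    exact congrArg diagonal (funext hss)
  have hB : (D * A * D).PosSemidef := by
    simpa [D] using hpsd.mul_mul_conjTranspose_same D
  have hBapply : ∀ i j, (D * A * D) i j = s i * A i j * s j := by
    simp [D, diagonal_mul, mul_diagonal]
  have hDx : (D * A * D) *ᵥ (D *ᵥ x) = 0 := by
    rw [mulVec_mulVec, mul_assoc, hDD, mul_one, ← mulVec_mulVec, hx, mulVec_zero]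
  have hDx0 : D *ᵥ x = 0 := hB.eq_zero_of_mulVec_eq_zero hconn
    (fun i j hij => hBapply i j ▸ SignedSet.mul_apply_mul_nonpos hA heven hodd hij)
    (fun i j hij => hBapply i j ▸ SignedSet.mul_apply_mul_neg hA heven hodd hij) hDx (w := w)
    (by simp [D, mulVec_diagonal, hw])
  calc x = D *ᵥ (D *ᵥ x) := by rw [mulVec_mulVec, hDD, one_mulVec]
    _ = 0 := by rw [hDx0, mulVec_zero]

theorem SignedSet.submatrix {W : Type*} {Ge Go : SimpleGraph V} {A : Matrix V V ℝ}
    (hA : A ∈ SignedSet Ge Go) {f : W → V} (hf : Function.Injective f) :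
    A.submatrix f f ∈ SignedSet (Ge.comap f) (Go.comap f) :=
  ⟨hA.1.submatrix f, fun i j => by simpa [hf.ne_iff] using hA.2 (f i) (f j)⟩

theorem matNullity_le_card_of_forall_eq_zero [Fintype V] {A : Matrix V V ℝ} (T : Finset V)
    (h : ∀ x, A *ᵥ x = 0 → (∀ i ∈ T, x i = 0) → x = 0) : matNullity A ≤ T.card := by
  let f := (LinearMap.funLeft ℝ ℝ (Subtype.val : T → V)).comp (LinearMap.ker A.mulVecLin).subtype
  have hf : Function.Injective f := by
    rw [← LinearMap.ker_eq_bot, LinearMap.ker_eq_bot']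
    rintro ⟨x, hx⟩ hfx
    exact Subtype.ext (h x hx fun i hi => congrFun hfx ⟨i, hi⟩)
  unfold matNullity
  simpa using LinearMap.finrank_le_finrank_of_injective hf

theorem matNullity_le_card_s14 [Fintype V] (A : Matrix V V ℝ) : matNullity A ≤ Fintype.card V :=
  (Submodule.finrank_le _).trans (Module.finrank_fintype_fun_eq_card ℝ).le

theorem nuSigned_le_MplusSigned [Fintype V] (Ge Go : SimpleGraph V) :
    nuSigned Ge Go ≤ MplusSigned Ge Go :=
  csSup_le_csSup' ⟨Fintype.card V, fun _ ⟨A, _, _, hn⟩ => hn ▸ matNullity_le_card_s14 A⟩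
    fun _ ⟨A, hA, hpsd, _, hn⟩ => ⟨A, hA, hpsd, hn⟩

theorem MplusSigned_le_of_forall_matNullity_le [Fintype V] {Ge Go : SimpleGraph V} {n : ℕ}
    (h : ∀ A ∈ SignedSet Ge Go, A.PosSemidef → matNullity A ≤ n) : MplusSigned Ge Go ≤ n :=
  csSup_le' fun _ ⟨A, hA, hpsd, hn⟩ => hn ▸ h A hA hpsd

end SignedGraph

theorem stmt14_general {V : Type*} [Fintype V] [DecidableEq V]
    (Ge Go : SimpleGraph V)
    (h2conn : ∀ u : V,
      ((Ge ⊔ Go).comap (Subtype.val : {x : V // x ≠ u} → V)).Connected)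
    (v : V)
    (hbip : IsBalanced (Ge.comap (Subtype.val : {x : V // x ≠ v} → V))
                       (Go.comap (Subtype.val : {x : V // x ≠ v} → V))) :
    (∀ A ∈ SignedSet Ge Go, A.PosSemidef → matNullity A ≤ 2) ∧
    nuSigned Ge Go ≤ MplusSigned Ge Go ∧ MplusSigned Ge Go ≤ 2 := by
  have hnullity : ∀ A ∈ SignedSet Ge Go, A.PosSemidef → matNullity A ≤ 2 := by
    intro A hA hpsd
    obtain ⟨w⟩ := (h2conn v).nonempty
    refine (matNullity_le_card_of_forall_eq_zero {v, w.val} fun x hx hvw => ?_).trans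
      Finset.card_le_two
    have hxv : x v = 0 := hvw v (by simp)
    have hker := A.submatrix_val_mulVec_comp_val (p := (· ≠ v)) (x := x) (by simpa using hxv)
    rw [hx] at hker
    have hrestr : x ∘ Subtype.val = 0 := hbip.eq_zero_of_mulVec_eq_zero (h2conn v)
      (SignedSet.submatrix hA Subtype.val_injective) (hpsd.submatrix _) hker (w := w)
      (hvw w (by simp))
    funext i
    by_cases hi : i = v
    · exact hi ▸ hxv
    · exact congrFun hrestr ⟨i, hi⟩
  exact ⟨hnullity, nuSigned_le_MplusSigned Ge Go, MplusSigned_le_of_forall_matNullity_le hnullity⟩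

/-- a 2-connected almost bipartite signed graph has
`ν(Ge, Go) ≤ M₊(Ge, Go) ≤ 2`: every positive semidefinite matrix in `S(Ge, Go)` has
nullity at most `2`. -/
theorem stmt14 {V : Type*} [Fintype V] [DecidableEq V]
    (Ge Go : SimpleGraph V) (hcard : 3 ≤ Fintype.card V)
    (hconn : (Ge ⊔ Go).Connected)
    (h2conn : ∀ u : V,
      ((Ge ⊔ Go).comap (Subtype.val : {x : V // x ≠ u} → V)).Connected)
    (v : V)
    (hbip : IsBalanced (Ge.comap (Subtype.val : {x : V // x ≠ v} → V))
                       (Go.comap (Subtype.val : {x : V // x ≠ v} → V))) :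
    (∀ A ∈ SignedSet Ge Go, A.PosSemidef → matNullity A ≤ 2) ∧
    nuSigned Ge Go ≤ MplusSigned Ge Go ∧ MplusSigned Ge Go ≤ 2 :=
  stmt14_general Ge Go h2conn v hbip
end

section
/- Let V = Fin 6 and let (Ge, Go) be the double prism: Ge is the simple graph with edges {0,1}, {0,2}, {1,2}, {3,4}, {3,5}, {4,5}, {0,3}, {1,4}, {2,5}, and Go is the simple graph with edges {0,3}, {1,4}, {2,5} (so each of the pairs {0,3}, {1,4}, {2,5} is joined by both an even and an odd edge, and the two triangles {0,1,2} and {3,4,5} consist of even edges). Then ν(Ge, Go) = 2. -/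
open Matrix

/-!
Upper bound. A positive semidefinite `A` is the Gram matrix of vectors `v₀, …, v₅`, and its
nullity is `6` minus the dimension of their span. The sign pattern makes the triangles
`a = (v₀, v₁, v₂)` and `b = (v₃, v₄, v₅)` pairwise obtuse, with `aᵢ ⟂ bⱼ` for `i ≠ j`; any two
vertices of an obtuse triangle are linearly independent. If `b` is dependent, then
`b₀ ∈ span {b₁, b₂}`, so `a₀ ⟂ b₀` and the orthogonal planes `span {a₀, a₁}`, `span {b₀, b₂}`
give dimension `4`. If `b` is independent and the span were only `3`-dimensional, every `aᵢ`
lies in `span b`, and Cramer's rule gives `det G * ⟪aᵢ, aⱼ⟫ = tᵢ * adj(G)ᵢⱼ * tⱼ`, where `G` is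
the Gram matrix of `b`, `tᵢ = ⟪aᵢ, bᵢ⟫` and `adj(G)ᵢⱼ > 0`. So the three products `tᵢ * tⱼ`
would all be negative, which is impossible.

Lower bound. The Laplacian of the two even triangles lies in `S(Ge, Go)` and has nullity `2`,
one per connected component. It has the SAP: each column of `X` lies in its kernel, hence is
constant on each triangle, and it vanishes at one vertex of each triangle.
-/

open Module Submodule Set
open scoped InnerProductSpace MatrixOrder

instance Submodule.finiteDimensional_span_range {K V ι : Type*} [DivisionRing K]
    [AddCommGroup V] [Module K V] [Finite ι] (v : ι → V) :
    FiniteDimensional K (span K (range v)) :=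
  FiniteDimensional.span_of_finite K (finite_range v)

theorem Matrix.PosSemidef.exists_gram_eq {V : Type*} [Fintype V] {A : Matrix V V ℝ}
    (hA : A.PosSemidef) : ∃ v : V → EuclideanSpace ℝ V, gram ℝ v = A := by
  classical
  obtain ⟨B, rfl⟩ := CStarAlgebra.nonneg_iff_eq_star_mul_self.mp hA.nonneg
  refine ⟨fun i => WithLp.toLp 2 (Bᵀ i), ?_⟩
  ext i j
  simp [mul_apply, PiLp.inner_apply, mul_comm]

section InnerProductSpace

variable {E : Type*} [NormedAddCommGroup E] [InnerProductSpace ℝ E]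

theorem matNullity_gram_add_finrank_span {V : Type*} [Fintype V] (v : V → E) :
    matNullity (gram ℝ v) + finrank ℝ (span ℝ (range v)) = Fintype.card V := by
  have hker : LinearMap.ker (gram ℝ v).mulVecLin =
      LinearMap.ker (Fintype.linearCombination ℝ v) := by
    ext c
    simp only [LinearMap.mem_ker, mulVecLin_apply, Fintype.linearCombination_apply]
    rw [← (posSemidef_gram ℝ v).dotProduct_mulVec_zero_iff, star_dotProduct_gram_mulVec,
      inner_self_eq_zero]
  rw [matNullity, hker, ← Fintype.range_linearCombination, add_comm,
    LinearMap.finrank_range_add_finrank_ker, finrank_fintype_fun_eq_card]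

theorem Submodule.IsOrtho.finrank_sup {U W : Submodule ℝ E} [FiniteDimensional ℝ U]
    [FiniteDimensional ℝ W] (h : U ⟂ W) : finrank ℝ ↥(U ⊔ W) = finrank ℝ U + finrank ℝ W := by
  rw [← Submodule.finrank_sup_add_finrank_inf_eq, h.disjoint.eq_bot, finrank_bot, add_zero]

theorem linearIndependent_pair_of_inner_neg {p q r : E} (hpq : ⟪p, q⟫_ℝ < 0)
    (hpr : ⟪p, r⟫_ℝ < 0) (hqr : ⟪q, r⟫_ℝ < 0) : LinearIndependent ℝ ![q, r] := by
  have hq : q ≠ 0 := by rintro rfl; simp at hqr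
  rw [LinearIndependent.pair_iff' hq]
  rintro c rfl
  rw [inner_smul_right] at hpr hqr
  nlinarith [real_inner_self_pos.2 hq]

theorem det_gram_mul_inner {ι : Type*} [Fintype ι] [DecidableEq ι] {b : ι → E} {x : E}
    (hx : x ∈ span ℝ (range b)) (y : E) :
    (gram ℝ b).det * ⟪x, y⟫_ℝ =
      ∑ i, ∑ j, ⟪x, b i⟫_ℝ * (gram ℝ b).adjugate i j * ⟪b j, y⟫_ℝ := by
  obtain ⟨c, rfl⟩ := (mem_span_range_iff_exists_fun ℝ).1 hx
  have hxb : (fun i => ⟪∑ k, c k • b k, b i⟫_ℝ) = c ᵥ* gram ℝ b := by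
    ext i
    simp [sum_inner, inner_smul_left, vecMul, dotProduct]
  have hc : (c ᵥ* gram ℝ b) ᵥ* (gram ℝ b).adjugate = (gram ℝ b).det • c := by
    rw [vecMul_vecMul, mul_adjugate, vecMul_smul, vecMul_one]
  calc (gram ℝ b).det * ⟪∑ k, c k • b k, y⟫_ℝ
      = ∑ j, ((gram ℝ b).det • c) j * ⟪b j, y⟫_ℝ := by
        simp [sum_inner, inner_smul_left, Finset.mul_sum, mul_assoc]
    _ = _ := by
        rw [← hc, ← hxb]
        simp only [vecMul, dotProduct, Finset.sum_mul]
        rw [Finset.sum_comm]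

theorem adjugate_gram_pos {b : Fin 3 → E} (hb : Pairwise fun i j => ⟪b i, b j⟫_ℝ < 0)
    {i j : Fin 3} (hij : i ≠ j) : 0 < (gram ℝ b).adjugate i j := by
  have hsq : ∀ k, 0 < ⟪b k, b k⟫_ℝ := fun k => real_inner_self_pos.2 fun h0 => by
    simpa [h0] using hb (Fin.succAbove_ne k 0).symm
  have hneg : ∀ k l : Fin 3, k ≠ l → ⟪b k, b l⟫_ℝ < 0 := fun _ _ hkl => hb hkl
  rw [adjugate_fin_three]
  fin_cases i <;> fin_cases j <;> simp at hij ⊢ <;>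
    nlinarith [hsq 0, hsq 1, hsq 2, hneg 0 1 (by decide), hneg 0 2 (by decide),
      hneg 1 2 (by decide), hneg 1 0 (by decide), hneg 2 0 (by decide), hneg 2 1 (by decide)]

/-- Gram vectors of the double prism: `a` and `b` are the two triangles, and `a i`, `b i` are
joined by the doubled edges, on which the inner product is unconstrained. -/
structure IsObtusePrism (a b : Fin 3 → E) : Prop where
  inner_left_neg : Pairwise fun i j => ⟪a i, a j⟫_ℝ < 0
  inner_right_neg : Pairwise fun i j => ⟪b i, b j⟫_ℝ < 0
  inner_left_right : Pairwise fun i j => ⟪a i, b j⟫_ℝ = 0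

namespace IsObtusePrism

variable {a b : Fin 3 → E}

theorem not_forall_mem_span (h : IsObtusePrism a b) (hb : LinearIndependent ℝ b) :
    ¬ ∀ i, a i ∈ span ℝ (range b) := by
  intro ha
  have hdet : 0 < (gram ℝ b).det := (posDef_gram_of_linearIndependent hb).det_pos
  have key : ∀ i j, i ≠ j → ⟪a i, b i⟫_ℝ * ⟪a j, b j⟫_ℝ < 0 := by
    intro i j hij
    have e := det_gram_mul_inner (ha i) (a j)
    rw [Finset.sum_eq_single i (fun i' _ hi' => by simp [h.inner_left_right hi'.symm])
      (by simp), Finset.sum_eq_single j (fun j' _ hj' => by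
        rw [real_inner_comm (a j), h.inner_left_right hj'.symm, mul_zero]) (by simp),
      real_inner_comm (a j) (b j)] at e
    have hadj := adjugate_gram_pos h.inner_right_neg hij
    have hij' : ⟪a i, a j⟫_ℝ < 0 := h.inner_left_neg hij
    nlinarith [mul_neg_of_pos_of_neg hdet hij']
  have k01 := key 0 1 (by decide)
  have k02 := key 0 2 (by decide)
  have k12 := key 1 2 (by decide)
  nlinarith [sq_nonneg (⟪a 0, b 0⟫_ℝ * ⟪a 1, b 1⟫_ℝ * ⟪a 2, b 2⟫_ℝ),
    mul_pos (mul_pos (neg_pos.2 k01) (neg_pos.2 k02)) (neg_pos.2 k12)]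

theorem four_le_finrank_of_not_linearIndependent (h : IsObtusePrism a b)
    (hb : ¬ LinearIndependent ℝ b) :
    4 ≤ finrank ℝ ↥(span ℝ (range a) ⊔ span ℝ (range b)) := by
  have ha01 : LinearIndependent ℝ ![a 0, a 1] := linearIndependent_pair_of_inner_neg
    (h.inner_left_neg (by decide : (2 : Fin 3) ≠ 0)) (h.inner_left_neg (by decide))
    (h.inner_left_neg (by decide))
  have hb02 : LinearIndependent ℝ ![b 0, b 2] := linearIndependent_pair_of_inner_neg
    (h.inner_right_neg (by decide : (1 : Fin 3) ≠ 0)) (h.inner_right_neg (by decide))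
    (h.inner_right_neg (by decide))
  have hb12 : LinearIndependent ℝ ![b 1, b 2] := linearIndependent_pair_of_inner_neg
    (h.inner_right_neg (by decide : (0 : Fin 3) ≠ 1)) (h.inner_right_neg (by decide))
    (h.inner_right_neg (by decide))
  have hb0 : b 0 ∈ span ℝ (range ![b 1, b 2]) := by
    have hcons : (Fin.cons (b 0) ![b 1, b 2] : Fin 3 → E) = b := by
      ext i; fin_cases i <;> rfl
    by_contra hb0
    exact hb (hcons ▸ linearIndependent_finCons.2 ⟨hb12, hb0⟩)
  have hab00 : ⟪a 0, b 0⟫_ℝ = 0 := by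
    refine (isOrtho_span.2 ?_).inner_eq (mem_span_singleton_self (a 0)) hb0
    rintro _ rfl _ ⟨k, rfl⟩
    fin_cases k
    exacts [h.inner_left_right (by decide), h.inner_left_right (by decide)]
  have hortho : span ℝ (range ![a 0, a 1]) ⟂ span ℝ (range ![b 0, b 2]) := by
    refine isOrtho_span.2 ?_
    rintro _ ⟨i, rfl⟩ _ ⟨j, rfl⟩
    fin_cases i <;> fin_cases j
    exacts [hab00, h.inner_left_right (by decide), h.inner_left_right (by decide),
      h.inner_left_right (by decide)]
  have hle : span ℝ (range ![a 0, a 1]) ⊔ span ℝ (range ![b 0, b 2]) ≤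
      span ℝ (range a) ⊔ span ℝ (range b) := by
    refine sup_le_sup (span_le.2 ?_) (span_le.2 ?_) <;> rintro _ ⟨i, rfl⟩ <;> fin_cases i <;>
      exact subset_span ⟨_, rfl⟩
  calc 4 = finrank ℝ ↥(span ℝ (range ![a 0, a 1]) ⊔ span ℝ (range ![b 0, b 2])) := by
        rw [hortho.finrank_sup, finrank_span_eq_card ha01, finrank_span_eq_card hb02]; rfl
    _ ≤ _ := Submodule.finrank_mono hle

theorem four_le_finrank (h : IsObtusePrism a b) :
    4 ≤ finrank ℝ ↥(span ℝ (range a) ⊔ span ℝ (range b)) := by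
  by_cases hb : LinearIndependent ℝ b
  · by_contra! hlt
    have h3 : finrank ℝ (span ℝ (range b)) = 3 := by
      rw [finrank_span_eq_card hb, Fintype.card_fin]
    have heq : span ℝ (range b) = span ℝ (range a) ⊔ span ℝ (range b) :=
      eq_of_le_of_finrank_le le_sup_right (by omega)
    exact h.not_forall_mem_span hb fun i => heq ▸ mem_sup_left (subset_span ⟨i, rfl⟩)
  · exact h.four_le_finrank_of_not_linearIndependent hb

end IsObtusePrism

end InnerProductSpace

theorem SimpleGraph.Reachable.eq_of_forall_adj {V α : Type*} {G : SimpleGraph V} {f : V → α}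
    (hf : ∀ i j, G.Adj i j → f i = f j) {i j : V} (h : G.Reachable i j) : f i = f j := by
  obtain ⟨p⟩ := h
  induction p with
  | nil => rfl
  | cons hadj _ ih => exact (hf _ _ hadj).trans ih

theorem SimpleGraph.card_connectedComponent_eq_card {V α : Type*} [Fintype α]
    (G : SimpleGraph V) [Fintype G.ConnectedComponent] (f : V → α)
    (hf : Function.Surjective f) (h : ∀ i j, G.Reachable i j ↔ f i = f j) :
    Fintype.card G.ConnectedComponent = Fintype.card α := by
  refine Fintype.card_congr (Equiv.ofBijective
    (ConnectedComponent.lift f fun i j p _ => (h i j).1 p.reachable) ⟨?_, fun x => ?_⟩)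
  · rintro ⟨i⟩ ⟨j⟩ hij
    exact ConnectedComponent.sound ((h i j).2 hij)
  · obtain ⟨i, rfl⟩ := hf x
    exact ⟨G.connectedComponentMk i, rfl⟩

section Laplacian

variable {V : Type*} [Fintype V] [DecidableEq V]

theorem matNullity_lapMatrix (G : SimpleGraph V) [DecidableRel G.Adj] :
    matNullity (G.lapMatrix ℝ) = Fintype.card G.ConnectedComponent := by
  rw [G.card_connectedComponent_eq_finrank_ker_toLin'_lapMatrix, toLin'_apply']
  rfl

theorem lapMatrix_sdiff_mem_signedSet {Ge Go : SimpleGraph V} [DecidableRel (Ge \ Go).Adj]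
    (h : Go ≤ Ge) : (Ge \ Go).lapMatrix ℝ ∈ SignedSet Ge Go := by
  refine ⟨SimpleGraph.isSymm_lapMatrix ℝ _, fun i j =>
    ⟨fun hij => ?_, fun hij => absurd (h hij.1) hij.2, fun hij => ?_⟩⟩
  · simp [SimpleGraph.lapMatrix, SimpleGraph.degMatrix, hij.1.ne, hij.1, hij.2]
  · simp [SimpleGraph.lapMatrix, SimpleGraph.degMatrix, hij.1, hij.2.1]

theorem hasSAP_lapMatrix {Ge Go G : SimpleGraph V} [DecidableRel G.Adj]
    (h : ∀ i c, ∃ k, G.Reachable i k ∧ (k = c ∨ (Ge ⊔ Go).Adj k c)) :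
    HasSAP Ge Go (G.lapMatrix ℝ) := by
  intro X _ hX hGX
  refine Matrix.ext fun i c => ?_
  obtain ⟨k, hik, hkc⟩ := h i c
  have hcol : G.lapMatrix ℝ *ᵥ (fun r => X r c) = 0 :=
    funext fun r => congrFun (congrFun hGX r) c
  rw [(G.lapMatrix_mulVec_eq_zero_iff_forall_reachable).1 hcol i k hik]
  exact hX k c hkc

end Laplacian

section DoublePrism

def prismEven : SimpleGraph (Fin 6) := SimpleGraph.fromRel fun i j =>
  (i, j) ∈ ([(0, 1), (0, 2), (1, 2), (3, 4), (3, 5), (4, 5), (0, 3), (1, 4), (2, 5)] :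
    List (Fin 6 × Fin 6))

def prismOdd : SimpleGraph (Fin 6) := SimpleGraph.fromRel fun i j =>
  (i, j) ∈ ([(0, 3), (1, 4), (2, 5)] : List (Fin 6 × Fin 6))

instance : DecidableRel prismEven.Adj :=
  fun _ _ => decidable_of_iff' _ (SimpleGraph.fromRel_adj _ _ _)

instance : DecidableRel prismOdd.Adj :=
  fun _ _ => decidable_of_iff' _ (SimpleGraph.fromRel_adj _ _ _)

theorem prismOdd_le_prismEven : prismOdd ≤ prismEven := by
  intro i j
  revert i j
  decide

theorem isObtusePrism_of_gram_mem_signedSet {E : Type*} [NormedAddCommGroup E]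
    [InnerProductSpace ℝ E] {v : Fin 6 → E} (hv : gram ℝ v ∈ SignedSet prismEven prismOdd) :
    IsObtusePrism (v ∘ Fin.castAdd 3) (v ∘ Fin.natAdd 3) := by
  obtain ⟨-, hv⟩ := hv
  refine ⟨fun i j hij => (hv _ _).1 ?_, fun i j hij => (hv _ _).1 ?_,
    fun i j hij => (hv _ _).2.2 ?_⟩ <;> revert i j <;> decide

theorem matNullity_le_two_of_mem_signedSet {A : Matrix (Fin 6) (Fin 6) ℝ}
    (hA : A ∈ SignedSet prismEven prismOdd) (hpsd : A.PosSemidef) : matNullity A ≤ 2 := by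
  obtain ⟨v, rfl⟩ := hpsd.exists_gram_eq
  have hle : span ℝ (range (v ∘ Fin.castAdd 3)) ⊔
      span ℝ (range (v ∘ Fin.natAdd 3 : Fin 3 → _)) ≤ span ℝ (range v) :=
    sup_le (span_mono (range_comp_subset_range _ _)) (span_mono (range_comp_subset_range _ _))
  have h4 := (isObtusePrism_of_gram_mem_signedSet hA).four_le_finrank.trans
    (Submodule.finrank_mono hle)
  have h6 := matNullity_gram_add_finrank_span v
  rw [Fintype.card_fin] at h6
  omega

theorem prism_sdiff_reachable_iff {i j : Fin 6} :
    (prismEven \ prismOdd).Reachable i j ↔ (i : ℕ) / 3 = j / 3 := by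
  refine ⟨fun h => h.eq_of_forall_adj (f := fun k : Fin 6 => (k : ℕ) / 3) ?_, fun h => ?_⟩
  · decide
  · have : i = j ∨ (prismEven \ prismOdd).Adj i j := by revert i j; decide
    rcases this with rfl | hadj
    exacts [.refl _, hadj.reachable]

theorem card_connectedComponent_prism_sdiff :
    Fintype.card (prismEven \ prismOdd).ConnectedComponent = 2 :=
  ((prismEven \ prismOdd).card_connectedComponent_eq_card
    (fun i : Fin 6 => (⟨i / 3, by omega⟩ : Fin 2)) (by decide)
    fun _ _ => prism_sdiff_reachable_iff.trans Fin.mk.inj_iff.symm).trans (Fintype.card_fin 2)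

theorem hasSAP_lapMatrix_prism_sdiff :
    HasSAP prismEven prismOdd ((prismEven \ prismOdd).lapMatrix ℝ) :=
  hasSAP_lapMatrix fun i c => by
    simp_rw [prism_sdiff_reachable_iff]
    revert i c
    decide

end DoublePrism

/-- the double prism has `ν = 2`. -/
theorem stmt15 :
    nuSigned
      (SimpleGraph.fromRel (fun i j : Fin 6 =>
        (i, j) ∈ ([(0, 1), (0, 2), (1, 2), (3, 4), (3, 5), (4, 5),
          (0, 3), (1, 4), (2, 5)] : List (Fin 6 × Fin 6))))
      (SimpleGraph.fromRel (fun i j : Fin 6 =>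
        (i, j) ∈ ([(0, 3), (1, 4), (2, 5)] : List (Fin 6 × Fin 6)))) = 2 := by
  change nuSigned prismEven prismOdd = 2
  refine IsGreatest.csSup_eq ⟨⟨(prismEven \ prismOdd).lapMatrix ℝ,
    lapMatrix_sdiff_mem_signedSet prismOdd_le_prismEven, SimpleGraph.posSemidef_lapMatrix ℝ _,
    hasSAP_lapMatrix_prism_sdiff, ?_⟩, ?_⟩
  · rw [matNullity_lapMatrix, card_connectedComponent_prism_sdiff]
  · rintro n ⟨A, hA, hpsd, -, rfl⟩
    exact matNullity_le_two_of_mem_signedSet hA hpsd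
end
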